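/- arXiv:2312.02457 — 5 statements merged into one kernel-verified Lean document; each statement's English description precedes it below -/
import Mathlib

section
/- Let i ≥ 1 be an integer and let f : ℝ^m → ℝ be smooth. Suppose that for every λ = (λ_1, …, λ_m) ∈ ℝ^m the function t ↦ f(λ_1 t^{w_1}, …, λ_m t^{w_m}) is O(t^i) as t → 0. Then for every point p ∈ N and every multi-index α with ⟨α, w⟩ < i, the partial derivative ∂^α f(p) vanishes. (This is the key step in the proof of Proposition A.1(1): decay along the special weighted paths t ↦ (λ_1 t^{w_1}, …, λ_m t^{w_m}) forces all weighted Taylor coefficients of weighted degree < i to vanish.) -/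
open Asymptotics Topology

/-- The partial derivative of `f : ℝ^m → ℝ` in the `a`-th coordinate direction. -/
noncomputable def partialDeriv (m : ℕ) (a : Fin m) (f : (Fin m → ℝ) → ℝ) :
    (Fin m → ℝ) → ℝ :=
  fun x => fderiv ℝ f x (Pi.single a 1)

/-- Iterated partial derivatives along a list of coordinate directions. -/
noncomputable def partialDerivList (m : ℕ) :
    List (Fin m) → ((Fin m → ℝ) → ℝ) → ((Fin m → ℝ) → ℝ)
  | [], f => f
  | a :: l, f => partialDeriv m a (partialDerivList m l f)

/-- The iterated partial derivative `∂^α f` attached to a multi-index `α : Fin m → ℕ`. -/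
noncomputable def partialDerivMulti (m : ℕ) (α : Fin m → ℕ) (f : (Fin m → ℝ) → ℝ) :
    (Fin m → ℝ) → ℝ :=
  partialDerivList m ((List.finRange m).flatMap fun a => List.replicate (α a) a) f


private lemma monomial_iteratedDeriv : ∀ (k j : ℕ) (c : ℝ), j ≤ k →
    iteratedDeriv j (fun t : ℝ => c * t ^ k) 0 = if j = k then c * k.factorial else 0 := by
  intro k
  induction k with
  | zero =>
    intro j c hj
    interval_cases j
    simp [iteratedDeriv_zero]
  | succ k ih =>
    intro j c hj
    match j with
    | 0 =>
      simp [iteratedDeriv_zero, Nat.succ_ne_zero]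
    | j + 1 =>
      rw [iteratedDeriv_succ']
      have hd : deriv (fun t : ℝ => c * t ^ (k + 1)) = fun t : ℝ => (c * (k + 1)) * t ^ k := by
        funext t
        rw [deriv_const_mul _ (differentiableAt_pow _), (hasDerivAt_pow _ _).deriv]
        simp only [Nat.add_sub_cancel]
        push_cast
        ring
      rw [hd, ih j (c * (k + 1)) (Nat.lt_succ_iff.mp hj)]
      by_cases h : j = k
      · subst h
        simp [Nat.factorial_succ]
        ring
      · simp [h, fun hh => h (Nat.succ_injective hh)]

private lemma isBigO_pow_of_iteratedDeriv_zero : ∀ (n : ℕ) (g : ℝ → ℝ),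
    ContDiff ℝ (⊤ : ℕ∞) g → (∀ k < n, iteratedDeriv k g 0 = 0) →
    g =O[𝓝 (0:ℝ)] fun t => t ^ n := by
  intro n
  induction n with
  | zero =>
    intro g hg _
    have : (fun t : ℝ => t ^ 0) = fun _ : ℝ => (1:ℝ) := by funext t; simp
    rw [this]
    exact (hg.continuous.tendsto 0).isBigO_one ℝ
  | succ n ih =>
    intro g hg h
    have h0 : g 0 = 0 := by simpa using h 0 n.succ_pos
    have hg' : ContDiff ℝ (⊤ : ℕ∞) (deriv g) := (contDiff_infty_iff_deriv.1 hg).2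
    have hD : ∀ k < n, iteratedDeriv k (deriv g) 0 = 0 := by
      intro k hk
      have := h (k + 1) (Nat.succ_lt_succ hk)
      rwa [iteratedDeriv_succ'] at this
    obtain ⟨C, hC⟩ := (ih (deriv g) hg' hD).bound
    rw [Metric.eventually_nhds_iff] at hC
    obtain ⟨δ, hδ, hb⟩ := hC
    rw [isBigO_iff]
    refine ⟨|C|, Metric.eventually_nhds_iff.2 ⟨δ, hδ, fun {t} ht => ?_⟩⟩
    have hbt : ∀ x ∈ Metric.closedBall (0:ℝ) |t|, ‖deriv g x‖ ≤ |C| * |t| ^ n := by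
      intro x hx
      simp only [Metric.mem_closedBall, Real.dist_eq, sub_zero] at hx
      have hxδ : dist x 0 < δ := by
        simp only [Real.dist_eq, sub_zero]
        calc |x| ≤ |t| := hx
        _ < δ := by simpa [Real.dist_eq] using ht
      calc ‖deriv g x‖ ≤ C * ‖x ^ n‖ := hb hxδ
        _ ≤ |C| * |t| ^ n := by
            have : ‖x ^ n‖ = |x| ^ n := by simp [abs_pow]
            rw [this]
            exact mul_le_mul (le_abs_self C) (pow_le_pow_left₀ (abs_nonneg x) hx n)
              (pow_nonneg (abs_nonneg x) n) (abs_nonneg C)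
    have := Convex.norm_image_sub_le_of_norm_deriv_le
      (s := Metric.closedBall (0:ℝ) |t|) (x := 0) (y := t)
      (fun x _ => (hg.differentiable (by simp)).differentiableAt)
      hbt (convex_closedBall _ _)
      (Metric.mem_closedBall_self (abs_nonneg t))
      (by simp [Metric.mem_closedBall, Real.dist_eq])
    rw [h0, sub_zero, sub_zero] at this
    calc ‖g t‖ ≤ |C| * |t| ^ n * ‖t‖ := this
      _ = |C| * ‖t ^ (n + 1)‖ := by
          simp [abs_pow, Real.norm_eq_abs, pow_succ]
          ring

private lemma pow_isLittleO_pow {k n : ℕ} (h : k < n) :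
    (fun t : ℝ => t ^ n) =o[𝓝[≠] (0:ℝ)] fun t => t ^ k := by
  rw [isLittleO_iff]
  intro c hc
  have hmem : Set.Ioo (-(min c 1)) (min c 1) ∈ 𝓝 (0:ℝ) :=
    Ioo_mem_nhds (by simp [hc]) (by simp [hc])
  filter_upwards [Filter.mem_inf_of_left hmem] with t ht
  have h1 : |t| ≤ 1 := by
    rcases ht with ⟨h1, h2⟩
    rw [abs_le]; constructor <;> nlinarith [min_le_right c 1]
  have h2 : |t| ≤ c := by
    rcases ht with ⟨ha, hb⟩
    rw [abs_le]; constructor <;> nlinarith [min_le_left c 1]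
  have : |t| ^ n ≤ c * |t| ^ k := by
    calc |t| ^ n ≤ |t| ^ (k + 1) := pow_le_pow_of_le_one (abs_nonneg t) h1 h
      _ = |t| * |t| ^ k := by ring
      _ ≤ c * |t| ^ k := by gcongr
  simpa [abs_pow] using this

private lemma iteratedDeriv_zero_of_isBigO (n : ℕ) (g : ℝ → ℝ)
    (hg : ContDiff ℝ (⊤ : ℕ∞) g) (h : g =O[𝓝[≠] (0:ℝ)] fun t => t ^ n) :
    ∀ k < n, iteratedDeriv k g 0 = 0 := by
  intro k
  induction k using Nat.strong_induction_on with
  | _ k IH =>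
    intro hk
    set c : ℝ := iteratedDeriv k g 0 with hc
    by_contra hne
    set P : ℝ → ℝ := fun t => (c / k.factorial) * t ^ k with hP
    have hPd : ContDiff ℝ (⊤ : ℕ∞) P := by
      apply ContDiff.mul contDiff_const (contDiff_id.pow k)
    have hsub : ContDiff ℝ (⊤ : ℕ∞) (fun t => g t - P t) := hg.sub hPd
    have hiter : ∀ j < k + 1, iteratedDeriv j (fun t => g t - P t) 0 = 0 := by
      intro j hj
      have hj' : j ≤ k := Nat.lt_succ_iff.mp hj
      have hsplit : iteratedDeriv j (fun t => g t - P t) 0 =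
          iteratedDeriv j g 0 - iteratedDeriv j P 0 := by
        simp only [← iteratedDerivWithin_univ]
        exact iteratedDerivWithin_sub (Set.mem_univ (0:ℝ)) uniqueDiffOn_univ
          (hg.contDiffWithinAt.of_le (by exact_mod_cast le_top)) (hPd.contDiffWithinAt.of_le (by exact_mod_cast le_top))
      rw [hsplit, hP, monomial_iteratedDeriv k j _ hj']
      rcases eq_or_lt_of_le hj' with rfl | hlt
      · simp only [if_pos rfl]
        field_simp
        simp [hc]
      · rw [if_neg (Nat.ne_of_lt hlt), IH j hlt (hlt.trans hk), sub_zero]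
    have hO2 : (fun t => g t - P t) =O[𝓝 (0:ℝ)] fun t => t ^ (k + 1) :=
      isBigO_pow_of_iteratedDeriv_zero (k + 1) _ hsub hiter
    have ho2 : (fun t => g t - P t) =o[𝓝[≠] (0:ℝ)] fun t => t ^ k :=
      (hO2.mono nhdsWithin_le_nhds).trans_isLittleO (pow_isLittleO_pow k.lt_succ_self)
    have hog : g =o[𝓝[≠] (0:ℝ)] fun t => t ^ k :=
      (h.mono (le_refl _)).trans_isLittleO (pow_isLittleO_pow hk)
    have hoP : P =o[𝓝[≠] (0:ℝ)] fun t => t ^ k := by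
      have : P = fun t => g t - (g t - P t) := by funext t; ring
      rw [this]
      exact hog.sub ho2
    have hcpos : 0 < |c / k.factorial| := by
      apply abs_pos.2
      intro hcc
      apply hne
      field_simp at hcc
      simpa using hcc
    have := (isLittleO_iff.1 hoP) (half_pos hcpos)
    obtain ⟨t, ht, htne⟩ := (this.and self_mem_nhdsWithin).exists
    have htp : 0 < |t| ^ k := pow_pos (abs_pos.2 htne) k
    rw [hP] at ht
    simp only [Real.norm_eq_abs, abs_mul, abs_pow] at ht
    nlinarith


private lemma infty_add_one_le : ((⊤:ℕ∞) : WithTop ℕ∞) + 1 ≤ ((⊤:ℕ∞) : WithTop ℕ∞) := by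
  exact_mod_cast le_of_eq (top_add 1)

private noncomputable def dirD (v : ℝ × ℝ) (G : ℝ × ℝ → ℝ) : ℝ × ℝ → ℝ :=
  fun p => fderiv ℝ G p v

private lemma dirD_contDiff {G : ℝ × ℝ → ℝ} (hG : ContDiff ℝ (⊤:ℕ∞) G) (v : ℝ × ℝ) :
    ContDiff ℝ (⊤:ℕ∞) (dirD v G) := by
  exact ContDiff.fderiv_apply (f := fun _ : ℝ × ℝ => G) (g := id) (k := fun _ => v)
    (hG.comp contDiff_snd) contDiff_id contDiff_const infty_add_one_le

private lemma hasDerivAt_slice_t {G : ℝ × ℝ → ℝ} (hG : Differentiable ℝ G) (s t : ℝ) :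
    HasDerivAt (fun t' => G (s, t')) (dirD (0,1) G (s,t)) t := by
  have h1 : HasDerivAt (fun t' : ℝ => ((s, t') : ℝ × ℝ)) ((0:ℝ),(1:ℝ)) t :=
    (hasDerivAt_const t s).prodMk (hasDerivAt_id t)
  exact (hG (s,t)).hasFDerivAt.comp_hasDerivAt t h1

private lemma hasDerivAt_slice_s {G : ℝ × ℝ → ℝ} (hG : Differentiable ℝ G) (s t : ℝ) :
    HasDerivAt (fun s' => G (s', t)) (dirD (1,0) G (s,t)) s := by
  have h1 : HasDerivAt (fun s' : ℝ => ((s', t) : ℝ × ℝ)) ((1:ℝ),(0:ℝ)) s :=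
    (hasDerivAt_id s).prodMk (hasDerivAt_const s t)
  exact (hG (s,t)).hasFDerivAt.comp_hasDerivAt s h1

private lemma dirD_comm {G : ℝ × ℝ → ℝ} (hG : ContDiff ℝ (⊤:ℕ∞) G) (u v : ℝ × ℝ) :
    dirD u (dirD v G) = dirD v (dirD u G) := by
  funext p
  have hd : ∀ q, DifferentiableAt ℝ (fderiv ℝ G) q := fun q =>
    ((hG.fderiv_right (m := (⊤:ℕ∞)) infty_add_one_le).differentiable (by simp)).differentiableAt
  have key : ∀ x y : ℝ × ℝ, dirD x (dirD y G) p = fderiv ℝ (fderiv ℝ G) p x y := by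
    intro x y
    show fderiv ℝ (fun q => fderiv ℝ G q y) p x = _
    rw [fderiv_clm_apply (hd p) (differentiableAt_const y)]
    simp
  rw [key u v, key v u]
  exact (hG.contDiffAt.isSymmSndFDerivAt (by rw [minSmoothness_of_isRCLikeNormedField]; exact WithTop.coe_le_coe.mpr le_top)).eq u v

private lemma dirD_iter_contDiff (v : ℝ × ℝ) :
    ∀ (k : ℕ) {G : ℝ × ℝ → ℝ}, ContDiff ℝ (⊤:ℕ∞) G → ContDiff ℝ (⊤:ℕ∞) ((dirD v)^[k] G) := by
  intro k
  induction k with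
  | zero => intro G hG; exact hG
  | succ k ih =>
    intro G hG
    rw [Function.iterate_succ_apply]
    exact ih (dirD_contDiff hG v)

private lemma dirD_iter_comm (u v : ℝ × ℝ) :
    ∀ (k : ℕ) {G : ℝ × ℝ → ℝ}, ContDiff ℝ (⊤:ℕ∞) G →
      dirD u ((dirD v)^[k] G) = (dirD v)^[k] (dirD u G) := by
  intro k
  induction k with
  | zero => intro G _; rfl
  | succ k ih =>
    intro G hG
    rw [Function.iterate_succ_apply, Function.iterate_succ_apply,
      ih (dirD_contDiff hG v), dirD_comm hG u v]

private lemma iteratedDeriv_slice :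
    ∀ (k : ℕ) {G : ℝ × ℝ → ℝ}, ContDiff ℝ (⊤:ℕ∞) G → ∀ (s t₀ : ℝ),
      iteratedDeriv k (fun t => G (s, t)) t₀ = (dirD (0,1))^[k] G (s, t₀) := by
  intro k
  induction k with
  | zero => intro G _ s t₀; simp [iteratedDeriv_zero]
  | succ k ih =>
    intro G hG s t₀
    rw [iteratedDeriv_succ']
    have hder : deriv (fun t => G (s, t)) = fun t => dirD (0,1) G (s, t) :=
      funext fun t => (hasDerivAt_slice_t (hG.differentiable (by simp)) s t).deriv
    rw [hder, ih (dirD_contDiff hG (0,1)) s t₀, Function.iterate_succ_apply]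

private lemma schwarz_comm {G : ℝ × ℝ → ℝ} (hG : ContDiff ℝ (⊤:ℕ∞) G) (k : ℕ) :
    iteratedDeriv k (fun t => deriv (fun s => G (s, t)) 0) 0 =
      deriv (fun s => iteratedDeriv k (fun t => G (s, t)) 0) 0 := by
  have e1 : (fun t => deriv (fun s => G (s, t)) 0) = fun t => dirD (1,0) G (0, t) :=
    funext fun t => (hasDerivAt_slice_s (hG.differentiable (by simp)) 0 t).deriv
  rw [e1, iteratedDeriv_slice k (dirD_contDiff hG (1,0)) 0 0,
    ← dirD_iter_comm (1,0) (0,1) k hG]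
  have e2 : deriv (fun s => ((dirD (0,1))^[k] G) (s, 0)) 0 =
      dirD (1,0) ((dirD (0,1))^[k] G) (0, 0) :=
    (hasDerivAt_slice_s ((dirD_iter_contDiff (0,1) k hG).differentiable (by simp)) 0 0).deriv
  rw [← e2]
  congr 1
  funext s
  rw [iteratedDeriv_slice k hG s 0]

private lemma partialDeriv_contDiff (m : ℕ) (a : Fin m) (f : (Fin m → ℝ) → ℝ)
    (hf : ContDiff ℝ (⊤:ℕ∞) f) : ContDiff ℝ (⊤:ℕ∞) (partialDeriv m a f) :=
  ContDiff.fderiv_apply (f := fun _ : Fin m → ℝ => f) (g := id) (k := fun _ => Pi.single a 1)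
    (hf.comp contDiff_snd) contDiff_id contDiff_const infty_add_one_le

private lemma key_step (m : ℕ) (w : Fin m → ℕ) (f : (Fin m → ℝ) → ℝ)
    (hf : ContDiff ℝ (⊤:ℕ∞) f) (i : ℤ) (a : Fin m) (hia : 1 ≤ i - (w a : ℤ))
    (hO : ∀ lam : Fin m → ℝ,
      (fun t : ℝ => f fun b => lam b * t ^ w b) =O[𝓝[≠] (0:ℝ)] fun t => t ^ i) :
    ∀ lam : Fin m → ℝ,
      (fun t : ℝ => partialDeriv m a f fun b => lam b * t ^ w b)
        =O[𝓝[≠] (0:ℝ)] fun t => t ^ (i - (w a : ℤ)) := by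
  intro lam
  have hi1 : 1 ≤ i := by have := (w a).cast_nonneg (α := ℤ); omega
  set n : ℕ := i.toNat with hn
  have hin : (n : ℤ) = i := Int.toNat_of_nonneg (by omega)
  have hwn : w a + 1 ≤ n := by omega
  have hpow : (fun t : ℝ => t ^ i) = fun t : ℝ => t ^ n := by
    funext t; rw [← hin, zpow_natCast]
  set e : Fin m → ℝ := Pi.single a (1:ℝ) with hedef
  set G : ℝ × ℝ → ℝ :=
    fun p => f fun b => (lam b + p.1 * e b) * p.2 ^ w b with hGdef
  have hG : ContDiff ℝ (⊤:ℕ∞) G := by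
    apply hf.comp
    apply contDiff_pi.2
    intro b
    exact ((contDiff_const.add (contDiff_fst.mul contDiff_const)).mul (contDiff_snd.pow _))
  have hslice : ∀ s : ℝ, ∀ k < n, iteratedDeriv k (fun t => G (s, t)) 0 = 0 := by
    intro s
    apply iteratedDeriv_zero_of_isBigO n _
      (hG.comp (contDiff_const.prodMk contDiff_id))
    have := hO (fun b => lam b + s * e b)
    rw [hpow] at this
    exact this
  set H : ℝ → ℝ := fun t => deriv (fun s => G (s, t)) 0 with hHdef
  have hHs : ContDiff ℝ (⊤:ℕ∞) H := by
    have hfun : H = fun t => dirD (1,0) G (0, t) := by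
      funext t
      exact (hasDerivAt_slice_s (hG.differentiable (by simp)) 0 t).deriv
    rw [hfun]
    exact (dirD_contDiff hG (1,0)).comp (contDiff_const.prodMk contDiff_id)
  have hvanish : ∀ k < n, iteratedDeriv k H 0 = 0 := by
    intro k hk
    rw [hHdef, schwarz_comm hG k]
    have : (fun s => iteratedDeriv k (fun t => G (s, t)) 0) = fun _ : ℝ => (0:ℝ) :=
      funext fun s => hslice s k hk
    rw [this, deriv_const]
  have hHO : H =O[𝓝 (0:ℝ)] fun t => t ^ n :=
    isBigO_pow_of_iteratedDeriv_zero n H hHs hvanish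
  have hid : ∀ t : ℝ, H t = t ^ w a * partialDeriv m a f (fun b => lam b * t ^ w b) := by
    intro t
    have hγ : HasDerivAt (fun s : ℝ => fun b => (lam b + s * e b) * t ^ w b)
        (fun b => (1 * e b) * t ^ w b) 0 := by
      apply hasDerivAt_pi.2
      intro b
      exact (((hasDerivAt_id (0:ℝ)).mul_const (e b)).const_add
        (lam b)).mul_const (t ^ w b)
    have hcomp := ((hf.differentiable (by simp)) _).hasFDerivAt.comp_hasDerivAt 0 hγ
    have e0 : (fun b => (lam b + 0 * e b) * t ^ w b)
        = fun b => lam b * t ^ w b := by funext b; ring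
    have ed : (fun b => (1 * e b) * t ^ w b)
        = (t ^ w a) • e := by
      funext b
      by_cases hba : b = a
      · subst hba; simp [hedef]
      · simp [hedef, Pi.single_apply, Ne.symm hba, hba]
    rw [e0] at hcomp
    have hder := hcomp.deriv
    have e3 : (fun s => G (s, t)) = (f ∘ fun s b => (lam b + s * e b) * t ^ w b) := by
      funext s; rfl
    show deriv (fun s => G (s, t)) 0 = _
    rw [e3, hder, ed, ContinuousLinearMap.map_smul]
    simp [partialDeriv, hedef, smul_eq_mul]
  -- conclusion
  set n' : ℕ := n - w a with hn'
  have hnn : n = w a + n' := by omega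
  have hgoalpow : (fun t : ℝ => t ^ (i - (w a:ℤ))) = fun t : ℝ => t ^ n' := by
    funext t
    rw [show i - (w a : ℤ) = (n' : ℤ) by omega, zpow_natCast]
  rw [hgoalpow]
  obtain ⟨C, hC⟩ := hHO.bound
  rw [isBigO_iff]
  refine ⟨C, ?_⟩
  filter_upwards [hC.filter_mono nhdsWithin_le_nhds, self_mem_nhdsWithin] with t hb ht
  have ht' : (0:ℝ) < |t| ^ w a := pow_pos (abs_pos.2 ht) _
  rw [hid t] at hb
  simp only [Real.norm_eq_abs, abs_mul, abs_pow] at hb ⊢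
  rw [hnn, pow_add] at hb
  nlinarith [abs_nonneg (partialDeriv m a f fun b => lam b * t ^ w b), ht']

private lemma partialDerivList_append (m : ℕ) (a : Fin m) :
    ∀ (l : List (Fin m)) (f : (Fin m → ℝ) → ℝ),
      partialDerivList m (l ++ [a]) f = partialDerivList m l (partialDeriv m a f) := by
  intro l
  induction l with
  | nil => intro f; rfl
  | cons b l ih =>
    intro f
    show partialDeriv m b (partialDerivList m (l ++ [a]) f) = _
    rw [ih f]
    rfl

private lemma mainList (m : ℕ) (w : Fin m → ℕ) :
    ∀ (l : List (Fin m)) (f : (Fin m → ℝ) → ℝ), ContDiff ℝ (⊤:ℕ∞) f →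
    ∀ i : ℤ, (∀ lam : Fin m → ℝ,
        (fun t : ℝ => f fun b => lam b * t ^ w b) =O[𝓝[≠] (0:ℝ)] fun t => t ^ i) →
    ((l.map fun a => (w a : ℤ)).sum < i) →
    ∀ p : Fin m → ℝ, (∀ a, 0 < w a → p a = 0) → partialDerivList m l f p = 0 := by
  intro l
  induction l using List.reverseRecOn with
  | nil =>
    intro f hf i hO hsum p hp
    have hi : 1 ≤ i := by simp at hsum; omega
    set n : ℕ := i.toNat with hn
    have hin : (n : ℤ) = i := Int.toNat_of_nonneg (by omega)
    have hpow : (fun t : ℝ => t ^ i) = fun t : ℝ => t ^ n := by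
      funext t; rw [← hin, zpow_natCast]
    have hval : (fun b => p b * (0:ℝ) ^ w b) = p := by
      funext b
      by_cases hb : w b = 0
      · simp [hb]
      · rw [zero_pow hb, mul_zero, hp b (Nat.pos_of_ne_zero hb)]
    have hlim : Filter.Tendsto (fun t : ℝ => f fun b => p b * t ^ w b) (𝓝[≠] 0) (𝓝 (f p)) := by
      have hc : Continuous (fun t : ℝ => f fun b => p b * t ^ w b) :=
        (hf.continuous).comp (continuous_pi fun b => continuous_const.mul (continuous_pow (w b)))
      have := hc.tendsto 0
      rw [hval] at this
      exact this.mono_left nhdsWithin_le_nhds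
    have hzero : Filter.Tendsto (fun t : ℝ => t ^ i) (𝓝[≠] (0:ℝ)) (𝓝 0) := by
      rw [hpow]
      have hn0 : n ≠ 0 := by omega
      exact (((continuous_pow n).tendsto' 0 0 (zero_pow hn0))).mono_left nhdsWithin_le_nhds
    exact tendsto_nhds_unique hlim ((hO p).trans_tendsto hzero)
  | append_singleton l a ih =>
    intro f hf i hO hsum p hp
    rw [partialDerivList_append]
    have hsum0 : 0 ≤ (l.map fun a => (w a : ℤ)).sum := by
      apply List.sum_nonneg
      intro x hx
      obtain ⟨b, _, rfl⟩ := List.mem_map.1 hx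
      exact (w b).cast_nonneg
    have hsuma : (l.map fun a => (w a : ℤ)).sum + (w a : ℤ) < i := by
      simpa [List.sum_append] using hsum
    have hia : 1 ≤ i - (w a : ℤ) := by omega
    exact ih (partialDeriv m a f) (partialDeriv_contDiff m a f hf) (i - (w a : ℤ))
      (key_step m w f hf i a hia hO) (by omega) p hp


private lemma flatMap_sum {m : ℕ} (l : List (Fin m)) (h : Fin m → List ℤ) :
    (l.flatMap h).sum = (l.map fun a => (h a).sum).sum := by
  induction l with
  | nil => rfl
  | cons a l ih => rw [List.flatMap_cons, List.sum_append, ih, List.map_cons, List.sum_cons]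

/-- If the smooth function `f : ℝ^m → ℝ` satisfies
`f (λ₁ t^{w₁}, …, λ_m t^{w_m}) = O(t^i)` as `t → 0` for every `λ ∈ ℝ^m`, then every iterated
partial derivative `∂^α f` of weighted degree `⟨α, w⟩ < i` vanishes at every point of
`N = {x : x_a = 0 whenever w_a > 0}`. -/
theorem partialDerivMulti_eq_zero_of_isBigO
    (m : ℕ) (w : Fin m → ℕ) (i : ℤ) (hi : 1 ≤ i)
    (f : (Fin m → ℝ) → ℝ) (hf : ContDiff ℝ (⊤ : ℕ∞) f)
    (hO : ∀ lam : Fin m → ℝ,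
      (fun t : ℝ => f fun a => lam a * t ^ w a) =O[𝓝 (0:ℝ)] fun t => t ^ i)
    (p : Fin m → ℝ) (hp : ∀ a, 0 < w a → p a = 0)
    (α : Fin m → ℕ) (hα : (∑ a, (α a : ℤ) * (w a : ℤ)) < i) :
    partialDerivMulti m α f p = 0 := by
  have hf' : ContDiff ℝ (⊤:ℕ∞) f := hf.of_le (by simp)
  have hO' : ∀ lam : Fin m → ℝ,
      (fun t : ℝ => f fun b => lam b * t ^ w b) =O[𝓝[≠] (0:ℝ)] fun t => t ^ i :=
    fun lam => (hO lam).mono nhdsWithin_le_nhds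
  have hsum : ((((List.finRange m).flatMap fun a => List.replicate (α a) a).map
      fun a => (w a : ℤ)).sum) = ∑ a, (α a : ℤ) * (w a : ℤ) := by
    rw [List.map_flatMap]
    have e1 : (fun a : Fin m => (List.replicate (α a) a).map fun b => (w b : ℤ))
        = fun a : Fin m => List.replicate (α a) ((w a : ℤ)) := by
      funext a; rw [List.map_replicate]
    rw [e1, flatMap_sum _ (fun a => List.replicate (α a) ((w a : ℤ))), Fin.sum_univ_def]
    apply congrArg
    apply List.map_congr_left
    intro a _
    rw [List.sum_replicate, nsmul_eq_mul]
  exact mainList m w _ f hf' i hO' (by rw [hsum]; exact hα) p hp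
end

section
/- Let i ∈ ℤ and τ = (τ_1, …, τ_k) ∈ R^k. Then the following are equivalent: (1) for every j ∈ ℤ and every σ ∈ M_{(j)}, the pairing Σ_a τ_a σ_a lies in F_{i+j}; (2) τ_a ∈ F_{i+v_a} for every a. Consequently, the dual filtration of the weighted free module (R^k, M_{(•)}) is itself the weighted filtration with vertical weights (−v_1, …, −v_k); equivalently, the dual frame of a weighted frame is a weighted frame for the dual bundle. -/
/-- (Local model of the dual weighting.)  Let `R` be a commutative ring with an
antitone multiplicative family of ideals `F` satisfying `F i = R` for `i ≤ 0`, and let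
`v : Fin k → ℤ` be vertical weights, filtering the free module `R^k` by
`M_(j) = {σ | σ_a ∈ F (j - v_a)}`.  Then `τ ∈ R^k` pairs every `σ ∈ M_(j)` into `F (i + j)` if
and only if `τ_a ∈ F (i + v_a)` for all `a`: the dual filtration is the weighted filtration
with vertical weights `-v`, i.e. the dual frame of a weighted frame is a weighted frame. -/
theorem dual_weighting_mem_iff
    {R : Type*} [CommRing R] (F : ℤ → Ideal R)
    (hF : Antitone F) (hF0 : ∀ i : ℤ, i ≤ 0 → F i = ⊤)
    (hFmul : ∀ i j : ℤ, F i * F j ≤ F (i + j))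
    (k : ℕ) (v : Fin k → ℤ) (i : ℤ) (τ : Fin k → R) :
    (∀ j : ℤ, ∀ σ : Fin k → R, (∀ a, σ a ∈ F (j - v a)) → (∑ a, τ a * σ a) ∈ F (i + j))
      ↔ ∀ a, τ a ∈ F (i + v a) := by
  constructor
  · intro h a
    have := h (v a) (fun b => if b = a then 1 else 0) ?_
    · simpa using this
    · intro b
      by_cases hb : b = a
      · subst hb; simp [hF0 0 le_rfl]
      · simp [hb]
  · intro h j σ hσ
    refine Ideal.sum_mem _ fun a _ => ?_
    have : τ a * σ a ∈ F (i + v a) * F (j - v a) :=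
      Ideal.mul_mem_mul (h a) (hσ a)
    have := hFmul _ _ this
    convert this using 2
    omega
end

section
/- Let v ∈ ℤ^k and v' ∈ ℤ^{k'} be vertical weight tuples, with filtrations M_{(i)} = {σ ∈ R^k : σ_a ∈ F_{i−v_a} ∀a} and M'_{(i)} = {σ ∈ R^{k'} : σ_b ∈ F_{i−v'_b} ∀b}. Let φ : R^k → R^{k'} be an R-linear map and let φ^T : R^{k'} → R^k be its transpose, characterized by Σ_a (φ^T τ)_a σ_a = Σ_b τ_b (φσ)_b for all σ ∈ R^k, τ ∈ R^{k'}. Then φ(M_{(i)}) ⊆ M'_{(i)} for all i ∈ ℤ if and only if for all i ∈ ℤ, φ^T maps {τ ∈ R^{k'} : τ_b ∈ F_{i+v'_b} ∀b} into {τ ∈ R^k : τ_a ∈ F_{i+v_a} ∀a}. (Local model of the proposition that a vector bundle morphism over the identity is a weighted morphism if and only if it preserves the filtrations of sections.) -/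
/-- (Local model: a vector bundle morphism over the identity is weighted iff its
transpose preserves the dual filtrations.)  With `F` an antitone multiplicative family of ideals
of `R` with `F i = R` for `i ≤ 0`, vertical weights `v : Fin k → ℤ`, `v' : Fin k' → ℤ`, an
`R`-linear map `φ : R^k → R^{k'}` and its transpose `φᵀ` (characterized by
`Σ_a (φᵀ τ)_a σ_a = Σ_b τ_b (φ σ)_b`), one has `φ (M_(i)) ⊆ M'_(i)` for all `i` if and only if
`φᵀ` maps `{τ | τ_b ∈ F (i + v'_b)}` into `{τ | τ_a ∈ F (i + v_a)}` for all `i`. -/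
theorem weighted_linear_map_iff_transpose
    {R : Type*} [CommRing R] (F : ℤ → Ideal R)
    (hF : Antitone F) (hF0 : ∀ i : ℤ, i ≤ 0 → F i = ⊤)
    (hFmul : ∀ i j : ℤ, F i * F j ≤ F (i + j))
    (k k' : ℕ) (v : Fin k → ℤ) (v' : Fin k' → ℤ)
    (φ : (Fin k → R) →ₗ[R] (Fin k' → R)) (φT : (Fin k' → R) →ₗ[R] (Fin k → R))
    (hT : ∀ (σ : Fin k → R) (τ : Fin k' → R), ∑ a, φT τ a * σ a = ∑ b, τ b * φ σ b) :
    (∀ i : ℤ, ∀ σ : Fin k → R, (∀ a, σ a ∈ F (i - v a)) → ∀ b, φ σ b ∈ F (i - v' b))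
      ↔ ∀ i : ℤ, ∀ τ : Fin k' → R, (∀ b, τ b ∈ F (i + v' b)) → ∀ a, φT τ a ∈ F (i + v a) := by
  set e : Fin k → (Fin k → R) := fun a j => if a = j then 1 else 0 with he
  set e' : Fin k' → (Fin k' → R) := fun b j => if b = j then 1 else 0 with he'
  have hA : ∀ a b, φT (e' b) a = φ (e a) b := by
    intro a b
    have h := hT (e a) (e' b)
    simpa [he, he', mul_ite, Finset.sum_ite_eq] using h
  have hmem : ∀ {x : R} {p q r : ℤ}, x ∈ F p → p = q → x ∈ F q := by
    rintro x p q r hx rfl; exact hx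
  have hea : ∀ a a', e a a' ∈ F (v a - v a') := by
    intro a a'
    by_cases h : a = a'
    · subst h; simp only [he, if_pos rfl]
      rw [hF0 _ (by omega)]; trivial
    · simp only [he, if_neg h]; exact zero_mem _
  have he'b : ∀ b b', e' b b' ∈ F (-v' b + v' b') := by
    intro b b'
    by_cases h : b = b'
    · subst h; simp only [he', if_pos rfl]
      rw [hF0 _ (by omega)]; trivial
    · simp only [he', if_neg h]; exact zero_mem _
  constructor
  · intro h i τ hτ a
    have hC : ∀ b, φ (e a) b ∈ F (v a - v' b) := h (v a) (e a) (hea a)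
    have hrw : φT τ a = ∑ b, τ b * φT (e' b) a := by
      rw [LinearMap.pi_apply_eq_sum_univ φT τ]
      simp [he', Finset.sum_apply, smul_eq_mul]
    rw [hrw]
    refine Ideal.sum_mem _ (fun b _ => ?_)
    rw [hA a b]
    refine hmem (r := 0) (hFmul _ _ (Ideal.mul_mem_mul (hτ b) (hC b))) (by ring)
  · intro h i σ hσ b
    have hC : ∀ a, φT (e' b) a ∈ F (-v' b + v a) := h (-v' b) (e' b) (he'b b)
    have hrw : φ σ b = ∑ a, σ a * φ (e a) b := by
      rw [LinearMap.pi_apply_eq_sum_univ φ σ]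
      simp [he, Finset.sum_apply, smul_eq_mul]
    rw [hrw]
    refine Ideal.sum_mem _ (fun a _ => ?_)
    rw [← hA a b]
    refine hmem (r := 0) (hFmul _ _ (Ideal.mul_mem_mul (hσ a) (hC a))) (by ring)
end

section
/- Let v ∈ ℤ^k be a vertical weight tuple and M_{(i)} = {σ ∈ C^∞(ℝ^m, ℝ)^k : σ_a ∈ F_{i−v_a} for all a}. Let ρ : C^∞(ℝ^m, ℝ)^k → C^∞(N, ℝ)^k be componentwise restriction to the coordinate subspace N. Then for every i ∈ ℤ, the image ρ(M_{(i)}) equals {g ∈ C^∞(N, ℝ)^k : g_a = 0 for every a with v_a < i}. (Local model of the proposition that a linear weighting of a vector bundle V over a weighted pair (M, N) determines a filtration of V|_N by wide subbundles of rank #{a : v_a ≥ i}, whose sections are the image of Γ(V)_{(i)} under restriction.) -/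
open Asymptotics Topology

/-- The commutative ring of smooth real-valued functions on `ℝ^m`. -/
def SmoothFns (m : ℕ) : Subring ((Fin m → ℝ) → ℝ) where
  carrier := {f | ContDiff ℝ (⊤ : ℕ∞) f}
  mul_mem' {f g} hf hg := by
    simp only [Set.mem_setOf_eq] at *
    exact hf.mul hg
  one_mem' := by
    simp only [Set.mem_setOf_eq]
    exact contDiff_const
  add_mem' {f g} hf hg := by
    simp only [Set.mem_setOf_eq] at *
    exact hf.add hg
  zero_mem' := by
    simp only [Set.mem_setOf_eq]
    exact contDiff_const
  neg_mem' {f} hf := by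
    simp only [Set.mem_setOf_eq] at *
    exact hf.neg

lemma mem_smoothFns {m : ℕ} {f : (Fin m → ℝ) → ℝ} : f ∈ SmoothFns m ↔ ContDiff ℝ (⊤ : ℕ∞) f :=
  Iff.rfl

/-- The monomial `x ^ α` as a smooth function. -/
def monomial (m : ℕ) (α : Fin m → ℕ) : SmoothFns m :=
  ⟨fun x => ∏ a, x a ^ α a,
    mem_smoothFns.mpr <| contDiff_prod fun a _ => (contDiff_apply ℝ ℝ a).pow (α a)⟩

/-- The local model of a weighting: the ideal of smooth functions generated by the
monomials of weighted degree at least `i`. -/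
def weightIdeal (m : ℕ) (w : Fin m → ℕ) (i : ℤ) : Ideal (SmoothFns m) :=
  Ideal.span {f | ∃ α : Fin m → ℕ, i ≤ ∑ a, (α a : ℤ) * (w a : ℤ) ∧ f = monomial m α}

/-- A weighted path. -/
def IsWeightedPath (m : ℕ) (w : Fin m → ℕ) (γ : ℝ → Fin m → ℝ) : Prop :=
  ContDiff ℝ (⊤ : ℕ∞) γ ∧ ∀ a, (fun t => γ t a) =O[𝓝 (0:ℝ)] fun t => t ^ (w a)

/-- The linear coordinate subspace `N = {x : x_a = 0 for all a with w_a > 0}` determined by the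
weighting. -/
def weightSubspace (m : ℕ) (w : Fin m → ℕ) : Submodule ℝ (Fin m → ℝ) where
  carrier := {x | ∀ a, 0 < w a → x a = 0}
  add_mem' {x y} hx hy := fun a ha => by
    have : (x + y) a = x a + y a := rfl
    rw [this, hx a ha, hy a ha, add_zero]
  zero_mem' := fun a _ => rfl
  smul_mem' c x hx := fun a ha => by
    have : (c • x) a = c * x a := rfl
    rw [this, hx a ha, mul_zero]


section Aux

variable (m : ℕ) (w : Fin m → ℕ)

/-- The ideal of smooth functions vanishing on the weight subspace. -/
def vanishIdealAux : Ideal (SmoothFns m) where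
  carrier := {f | ∀ x : Fin m → ℝ, (∀ a, 0 < w a → x a = 0) → (f : (Fin m → ℝ) → ℝ) x = 0}
  add_mem' {f g} hf hg := fun x hx => by
    have : ((f + g : SmoothFns m) : (Fin m → ℝ) → ℝ) x
        = (f : (Fin m → ℝ) → ℝ) x + (g : (Fin m → ℝ) → ℝ) x := rfl
    rw [this, hf x hx, hg x hx, add_zero]
  zero_mem' := fun x _ => rfl
  smul_mem' c f hf := fun x hx => by
    have : ((c • f : SmoothFns m) : (Fin m → ℝ) → ℝ) x
        = (c : (Fin m → ℝ) → ℝ) x * (f : (Fin m → ℝ) → ℝ) x := rfl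
    rw [this, hf x hx, mul_zero]

lemma weightIdeal_vanish {j : ℤ} (hj : 0 < j) {f : SmoothFns m}
    (hf : f ∈ weightIdeal m w j) (x : Fin m → ℝ) (hx : ∀ a, 0 < w a → x a = 0) :
    (f : (Fin m → ℝ) → ℝ) x = 0 := by
  have hle : weightIdeal m w j ≤ vanishIdealAux m w := by
    rw [weightIdeal, Ideal.span_le]
    rintro f ⟨α, hα, rfl⟩ y hy
    have hpos : 0 < ∑ a, (α a : ℤ) * (w a : ℤ) := lt_of_lt_of_le hj hα
    have hne : ∃ a ∈ Finset.univ, (α a : ℤ) * (w a : ℤ) ≠ 0 := by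
      by_contra h
      push_neg at h
      have : ∑ a, (α a : ℤ) * (w a : ℤ) = 0 := Finset.sum_eq_zero fun a ha => h a ha
      omega
    obtain ⟨a, -, ha⟩ := hne
    have hwa : 0 < w a := by
      rcases Nat.eq_zero_or_pos (w a) with h0 | h0
      · simp [h0] at ha
      · exact h0
    have hαa : α a ≠ 0 := by
      rcases Nat.eq_zero_or_pos (α a) with h0 | h0
      · simp [h0] at ha
      · omega
    show (∏ b, y b ^ α b) = 0
    apply Finset.prod_eq_zero (Finset.mem_univ a)
    rw [hy a hwa]
    exact zero_pow hαa
  exact hle hf x hx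

/-- Projection onto the weight subspace. -/
noncomputable def projAux : (Fin m → ℝ) →L[ℝ] weightSubspace m w :=
  LinearMap.toContinuousLinearMap <|
    LinearMap.codRestrict (weightSubspace m w)
      (LinearMap.pi fun a => if 0 < w a then 0 else LinearMap.proj a)
      (fun x a ha => by simp [LinearMap.pi_apply, if_pos ha])

lemma projAux_mem (x : weightSubspace m w) : projAux m w (x : Fin m → ℝ) = x := by
  apply Subtype.ext
  funext a
  show (if 0 < w a then (0 : (Fin m → ℝ) →ₗ[ℝ] ℝ) else LinearMap.proj a) (x : Fin m → ℝ) = _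
  by_cases ha : 0 < w a
  · rw [if_pos ha]
    exact (x.2 a ha).symm
  · rw [if_neg ha]
    rfl

end Aux

/-- (Local model: the filtration of `V|_N` induced by a linear weighting.)
For vertical weights `v : Fin k → ℤ`, the image of
`M_(i) = {σ ∈ C^∞(ℝ^m)^k : σ_a ∈ F_{i - v_a}}` under componentwise restriction to the coordinate
subspace `N` is exactly the set of smooth `k`-tuples on `N` whose components vanish for every
index `a` with `v_a < i`. -/
theorem restriction_image_weighted_sections
    (m : ℕ) (w : Fin m → ℕ) (k : ℕ) (v : Fin k → ℤ) (i : ℤ) :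
    {g : Fin k → (weightSubspace m w → ℝ) |
        ∃ σ : Fin k → SmoothFns m,
          (∀ a, σ a ∈ weightIdeal m w (i - v a)) ∧
            ∀ a, g a = fun x : weightSubspace m w => (σ a : (Fin m → ℝ) → ℝ) (x : Fin m → ℝ)}
      = {g : Fin k → (weightSubspace m w → ℝ) |
          (∀ a, ContDiff ℝ (⊤ : ℕ∞) (g a)) ∧ ∀ a, v a < i → g a = 0} := by
  ext g
  constructor
  · rintro ⟨σ, hσ, hg⟩
    refine ⟨fun a => ?_, fun a hva => ?_⟩
    · rw [hg a]
      exact (mem_smoothFns.mp (σ a).2).comp (weightSubspace m w).subtypeL.contDiff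
    · rw [hg a]
      funext x
      exact weightIdeal_vanish m w (by omega) (hσ a) x x.2
  · rintro ⟨hsm, hvan⟩
    classical
    refine ⟨fun a => if h : v a < i then 0
        else ⟨(g a) ∘ (projAux m w), (hsm a).comp (projAux m w).contDiff⟩,
      fun a => ?_, fun a => ?_⟩
    · by_cases h : v a < i
      · simp only [dif_pos h]
        exact Ideal.zero_mem _
      · have h1 : (1 : SmoothFns m) ∈ weightIdeal m w (i - v a) := by
          apply Ideal.subset_span
          refine ⟨fun _ => 0, by simp; omega, ?_⟩
          apply Subtype.ext
          funext x
          simp [monomial]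
        have := (Ideal.eq_top_iff_one _).mpr h1
        rw [this]
        exact Submodule.mem_top
    · by_cases h : v a < i
      · simp only [dif_pos h, hvan a h]
        rfl
      · simp only [dif_neg h]
        funext x
        show g a x = g a (projAux m w (x : Fin m → ℝ))
        rw [projAux_mem]
end

section
/- Let v ∈ ℤ^k be a vertical weight tuple and set M_{(i)} = {σ ∈ C^∞(ℝ^m, ℝ)^k : σ_a ∈ F_{i−v_a} for all a}. Then for every i ∈ ℤ and σ ∈ C^∞(ℝ^m, ℝ)^k, one has σ ∈ M_{(i)} if and only if for every j ∈ ℤ with i + j ≥ 1 and every g ∈ C^∞(ℝ^m, ℝ)^k with g_b ∈ F_{j+v_b} for all b, the function Σ_b g_b σ_b lies in F_{i+j}. (Local model of the recovery, in the correspondence between linear weightings and filtrations of fiberwise-polynomial functions, of the filtration of sections from the filtration of fiberwise-linear functions.) -/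
open Asymptotics Topology

lemma monomial_mul_monomial (m : ℕ) (α β : Fin m → ℕ) :
    monomial m α * monomial m β = monomial m (α + β) := by
  apply Subtype.ext
  funext x
  show (∏ a, x a ^ α a) * (∏ a, x a ^ β a) = ∏ a, x a ^ (α a + β a)
  rw [← Finset.prod_mul_distrib]
  exact Finset.prod_congr rfl fun a _ => (pow_add _ _ _).symm

lemma weightIdeal_mul_le (m : ℕ) (w : Fin m → ℕ) (p q : ℤ) :
    weightIdeal m w p * weightIdeal m w q ≤ weightIdeal m w (p + q) := by
  rw [weightIdeal, weightIdeal, Ideal.span_mul_span']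
  apply Ideal.span_le.2
  rintro f ⟨f₁, ⟨α, hα, rfl⟩, f₂, ⟨β, hβ, rfl⟩, rfl⟩
  apply Ideal.subset_span
  refine ⟨α + β, ?_, (monomial_mul_monomial m α β)⟩
  calc p + q ≤ (∑ a, (α a : ℤ) * w a) + ∑ a, (β a : ℤ) * w a := add_le_add hα hβ
    _ = ∑ a, ((α + β) a : ℤ) * w a := by
        rw [← Finset.sum_add_distrib]
        exact Finset.sum_congr rfl fun a _ => by push_cast [Pi.add_apply]; ring

lemma one_mem_weightIdeal (m : ℕ) (w : Fin m → ℕ) {p : ℤ} (hp : p ≤ 0) :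
    (1 : SmoothFns m) ∈ weightIdeal m w p := by
  apply Ideal.subset_span
  refine ⟨0, by simpa using hp, ?_⟩
  apply Subtype.ext
  funext x
  show (1 : ℝ) = ∏ a, x a ^ (0 : ℕ)
  simp

/-- (Local model: recovering the filtration of sections from the filtration of
fiberwise-linear functions.)  For vertical weights `v : Fin k → ℤ`, a tuple
`σ ∈ C^∞(ℝ^m)^k` lies in `M_(i) = {σ : σ_a ∈ F_{i - v_a}}` if and only if for every `j ∈ ℤ` with
`i + j ≥ 1` and every tuple `g` with `g_b ∈ F_{j + v_b}` for all `b` (a fiberwise-linear function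
of filtration degree `j`), the function `Σ_b g_b σ_b` lies in `F_{i + j}`. -/
theorem mem_weighted_sections_iff_pairing
    (m : ℕ) (w : Fin m → ℕ) (k : ℕ) (v : Fin k → ℤ) (i : ℤ)
    (σ : Fin k → SmoothFns m) :
    (∀ b, σ b ∈ weightIdeal m w (i - v b)) ↔
      ∀ j : ℤ, 1 ≤ i + j → ∀ g : Fin k → SmoothFns m,
        (∀ b, g b ∈ weightIdeal m w (j + v b)) →
          (∑ b, g b * σ b) ∈ weightIdeal m w (i + j) := by
  constructor
  · intro hσ j _ g hg
    apply Ideal.sum_mem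
    intro b _
    have : g b * σ b ∈ weightIdeal m w (j + v b) * weightIdeal m w (i - v b) :=
      Ideal.mul_mem_mul (hg b) (hσ b)
    have := weightIdeal_mul_le m w (j + v b) (i - v b) this
    rwa [show j + v b + (i - v b) = i + j by ring] at this
  · intro h b
    by_cases hb : i - v b ≤ 0
    · exact Ideal.eq_top_iff_one _ |>.2 (one_mem_weightIdeal m w hb) ▸ Submodule.mem_top
    · push_neg at hb
      have h1 : (1 : ℤ) ≤ i + (-v b) := by omega
      have := h (-v b) h1 (fun b' => if hbb : b' = b then 1 else 0) ?_
      · have heq : (∑ b', (if hbb : b' = b then (1 : SmoothFns m) else 0) * σ b') = σ b := by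
          rw [Finset.sum_eq_single b]
          · simp
          · intro b' _ hbb; simp [hbb]
          · simp
        rw [heq] at this
        rwa [show i + (-v b) = i - v b by ring] at this
      · intro b'
        by_cases hbb : b' = b
        · subst hbb
          simp only [dif_pos]
          exact one_mem_weightIdeal m w (by omega)
        · simp only [dif_neg hbb]
          exact Ideal.zero_mem _
end
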